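/- Let b ∈ (0,1), a_- = (1 - √(1 - b²))/2, and for a ∈ [a_-, 1/2] define q(a) = 2·[ 2b·arctan( -√(4a - 4a² - b²)/(2 - 2a + b) ) + (1-b)·arctan( b√(4a - 4a² - b²)/(2 - 2a - b²) ) + 2a·arctan( √(4a - 4a² - b²)/b ) - aπ ]. Then: (i) q'(a) = -2π + 4·arctan( √(4a - 4a² - b²)/b ) < 0 on (a_-, 1/2], so q is strictly decreasing; (ii) q(a_-) = -2πa_-; and (iii) -2πa < q(a) < 0 for all a ∈ (a_-, 1/2]. -/

import Mathlib

open Set Real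

/-- `q(a) = 2[2b arctan(-√(4a-4a²-b²)/(2-2a+b)) + (1-b) arctan(b√(4a-4a²-b²)/(2-2a-b²))
+ 2a arctan(√(4a-4a²-b²)/b) - aπ]`. -/
noncomputable def qfun (b a : ℝ) : ℝ :=
  2 * (2 * b * Real.arctan (-Real.sqrt (4 * a - 4 * a ^ 2 - b ^ 2) / (2 - 2 * a + b)) +
    (1 - b) * Real.arctan (b * Real.sqrt (4 * a - 4 * a ^ 2 - b ^ 2) / (2 - 2 * a - b ^ 2)) +
    2 * a * Real.arctan (Real.sqrt (4 * a - 4 * a ^ 2 - b ^ 2) / b) - a * Real.pi)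

lemma hasDerivAt_qfun (b a : ℝ) (hb0 : 0 < b) (hb1 : b < 1) (ha : a ≤ 1/2)
    (hD : 0 < 4*a - 4*a^2 - b^2) :
    HasDerivAt (qfun b)
      (-2 * Real.pi + 4 * Real.arctan (Real.sqrt (4 * a - 4 * a ^ 2 - b ^ 2) / b)) a := by
  have ha0 : 0 < a := by nlinarith
  have h1a : 0 < 1 - a := by linarith
  set s := Real.sqrt (4 * a - 4 * a ^ 2 - b ^ 2) with hsdef
  have hspos : 0 < s := Real.sqrt_pos.mpr (by linarith)
  have hs2 : s ^ 2 = 4 * a - 4 * a ^ 2 - b ^ 2 := Real.sq_sqrt (by linarith)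
  have hc : 0 < 2 - 2 * a + b := by linarith
  have he : 0 < 2 - 2 * a - b ^ 2 := by nlinarith
  have hP : HasDerivAt (fun x : ℝ => 4 * x - 4 * x ^ 2 - b ^ 2) (4 - 8 * a) a := by
    have h := (((hasDerivAt_id a).const_mul (4:ℝ)).sub
      ((hasDerivAt_pow 2 a).const_mul (4:ℝ))).sub_const (b ^ 2)
    refine h.congr_deriv ?_
    simp; ring
  have hS : HasDerivAt (fun x : ℝ => Real.sqrt (4 * x - 4 * x ^ 2 - b ^ 2))
      ((2 - 4 * a) / s) a := by
    have h := (Real.hasDerivAt_sqrt (by positivity : (4*a - 4*a^2 - b^2) ≠ 0)).comp a hP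
    refine h.congr_deriv ?_
    rw [← hsdef]
    field_simp
    ring
  -- term 1
  have hden1 : HasDerivAt (fun x : ℝ => 2 - 2 * x + b) (-2) a := by
    have h := (((hasDerivAt_id a).const_mul (2:ℝ)).const_sub (2:ℝ)).add_const b
    refine h.congr_deriv ?_; ring
  have h1 : HasDerivAt (fun x : ℝ =>
      Real.arctan (-Real.sqrt (4 * x - 4 * x ^ 2 - b ^ 2) / (2 - 2 * x + b)))
      (-((2 - 2*a - b^2) + b * (1 - 2*a)) / (2 * (1 - a) * (1 + b) * s)) a := by
    have h := ((hS.neg).div hden1 hc.ne').arctan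
    refine h.congr_deriv ?_
    simp only [Pi.div_apply, Pi.neg_apply]
    rw [← hsdef]
    field_simp
    linear_combination (-2 + 2*a - 3*b + 2*a*b - b^2) * hs2
  -- term 2
  have hden2 : HasDerivAt (fun x : ℝ => 2 - 2 * x - b ^ 2) (-2) a := by
    have h := (((hasDerivAt_id a).const_mul (2:ℝ)).const_sub (2:ℝ)).sub_const (b ^ 2)
    refine h.congr_deriv ?_; ring
  have h2 : HasDerivAt (fun x : ℝ =>
      Real.arctan (b * Real.sqrt (4 * x - 4 * x ^ 2 - b ^ 2) / (2 - 2 * x - b ^ 2)))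
      (b / ((1 - a) * s)) a := by
    have h := (((hS.const_mul b)).div hden2 he.ne').arctan
    refine h.congr_deriv ?_
    simp only [Pi.div_apply]
    rw [← hsdef]
    field_simp
    have hQ : 2 * (1 - a) - b ^ 2 ≠ 0 := ne_of_gt (by linarith)
    rw [div_eq_iff (pow_ne_zero 2 hQ), add_mul, one_mul, div_mul_cancel₀ _ (pow_ne_zero 2 hQ)]
    linear_combination (2*(1-a) - b^2) * hs2
  -- term 3
  have h3 : HasDerivAt (fun x : ℝ =>
      Real.arctan (Real.sqrt (4 * x - 4 * x ^ 2 - b ^ 2) / b))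
      (b * (1 - 2*a) / (2 * a * (1 - a) * s)) a := by
    have h := (hS.div_const b).arctan
    convert h using 1
    rw [← hsdef]
    field_simp
    linear_combination (1 - 2*a) * hs2
  -- assemble
  have hprod : HasDerivAt (fun x : ℝ =>
      2 * x * Real.arctan (Real.sqrt (4 * x - 4 * x ^ 2 - b ^ 2) / b))
      (2 * Real.arctan (s / b) + 2 * a * (b * (1 - 2*a) / (2 * a * (1 - a) * s))) a := by
    have h := ((hasDerivAt_id a).const_mul (2:ℝ)).mul h3
    refine h.congr_deriv ?_
    rw [← hsdef]; simp only [id_eq]; ring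
  have hq : HasDerivAt (qfun b)
      (2 * ((2 * b) * (-((2 - 2*a - b^2) + b * (1 - 2*a)) / (2 * (1 - a) * (1 + b) * s)) +
        (1 - b) * (b / ((1 - a) * s)) +
        (2 * Real.arctan (s / b) + 2 * a * (b * (1 - 2*a) / (2 * a * (1 - a) * s))) -
        Real.pi)) a := by
    unfold qfun
    have h := ((((h1.const_mul (2*b)).add (h2.const_mul (1-b))).add hprod).sub
      ((hasDerivAt_id a).mul_const Real.pi)).const_mul 2
    simp only [id_eq, one_mul] at h
    exact h
  convert hq using 1
  have hb' : b ≠ 0 := hb0.ne'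
  field_simp
  ring

/-- (i) `q'(a) = -2π + 4 arctan(√(4a-4a²-b²)/b) < 0` on `(a_-, 1/2]`, so `q` is strictly
decreasing there; (ii) `q(a_-) = -2πa_-`; (iii) `-2πa < q(a) < 0` on `(a_-, 1/2]`. -/
theorem qfun_decreasing (b : ℝ) (hb : b ∈ Set.Ioo (0 : ℝ) 1) :
    (∀ a ∈ Set.Ioc ((1 - Real.sqrt (1 - b ^ 2)) / 2) (1 / 2 : ℝ),
      HasDerivAt (qfun b)
        (-2 * Real.pi + 4 * Real.arctan (Real.sqrt (4 * a - 4 * a ^ 2 - b ^ 2) / b)) a ∧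
      -2 * Real.pi + 4 * Real.arctan (Real.sqrt (4 * a - 4 * a ^ 2 - b ^ 2) / b) < 0) ∧
    StrictAntiOn (qfun b) (Set.Ioc ((1 - Real.sqrt (1 - b ^ 2)) / 2) (1 / 2 : ℝ)) ∧
    qfun b ((1 - Real.sqrt (1 - b ^ 2)) / 2) =
      -2 * Real.pi * ((1 - Real.sqrt (1 - b ^ 2)) / 2) ∧
    (∀ a ∈ Set.Ioc ((1 - Real.sqrt (1 - b ^ 2)) / 2) (1 / 2 : ℝ),
      -2 * Real.pi * a < qfun b a ∧ qfun b a < 0) := by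
  obtain ⟨hb0, hb1⟩ := hb
  set r := Real.sqrt (1 - b ^ 2) with hrdef
  have hb2 : (0:ℝ) < 1 - b ^ 2 := by nlinarith
  have hr0 : 0 < r := Real.sqrt_pos.mpr hb2
  have hr2 : r ^ 2 = 1 - b ^ 2 := Real.sq_sqrt hb2.le
  have hr1 : r ≤ 1 := by nlinarith
  set am := (1 - r) / 2 with hamdef
  have ham0 : 0 ≤ am := by rw [hamdef]; linarith
  have ham2 : am < 1 / 2 := by rw [hamdef]; linarith
  -- positivity of D on Ioc
  have hDpos : ∀ a ∈ Set.Ioc am (1/2 : ℝ), 0 < 4 * a - 4 * a ^ 2 - b ^ 2 := by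
    intro a ⟨h1, h2⟩
    have h3 : a < (1 + r) / 2 := by linarith
    nlinarith [mul_pos (by linarith : (0:ℝ) < a - am) (by linarith : (0:ℝ) < (1 + r) / 2 - a)]
  -- part (i)
  have part1 : ∀ a ∈ Set.Ioc am (1/2 : ℝ),
      HasDerivAt (qfun b)
        (-2 * Real.pi + 4 * Real.arctan (Real.sqrt (4 * a - 4 * a ^ 2 - b ^ 2) / b)) a ∧
      -2 * Real.pi + 4 * Real.arctan (Real.sqrt (4 * a - 4 * a ^ 2 - b ^ 2) / b) < 0 := by
    intro a ha
    refine ⟨hasDerivAt_qfun b a hb0 hb1 ha.2 (hDpos a ha), ?_⟩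
    have := Real.arctan_lt_pi_div_two (Real.sqrt (4 * a - 4 * a ^ 2 - b ^ 2) / b)
    linarith [Real.pi_pos]
  -- continuity on Icc
  have hcont : ContinuousOn (qfun b) (Set.Icc am (1/2 : ℝ)) := by
    intro a ha
    apply ContinuousAt.continuousWithinAt
    have hc1 : (2 - 2 * a + b) ≠ 0 := by have := ha.2; intro h; nlinarith
    have hc2 : (2 - 2 * a - b ^ 2) ≠ 0 := by have := ha.2; intro h; nlinarith
    have hsq : ContinuousAt (fun x : ℝ => Real.sqrt (4 * x - 4 * x ^ 2 - b ^ 2)) a :=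
      (Real.continuous_sqrt.comp (by continuity)).continuousAt
    have hd1 : ContinuousAt (fun x : ℝ => 2 - 2 * x + b) a := by fun_prop
    have hd2 : ContinuousAt (fun x : ℝ => 2 - 2 * x - b ^ 2) a := by fun_prop
    have t1 : ContinuousAt (fun x : ℝ =>
        Real.arctan (-Real.sqrt (4 * x - 4 * x ^ 2 - b ^ 2) / (2 - 2 * x + b))) a :=
      Real.continuous_arctan.continuousAt.comp ((hsq.neg).div hd1 hc1)
    have t2 : ContinuousAt (fun x : ℝ =>
        Real.arctan (b * Real.sqrt (4 * x - 4 * x ^ 2 - b ^ 2) / (2 - 2 * x - b ^ 2))) a :=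
      Real.continuous_arctan.continuousAt.comp ((continuousAt_const.mul hsq).div hd2 hc2)
    have t3 : ContinuousAt (fun x : ℝ =>
        Real.arctan (Real.sqrt (4 * x - 4 * x ^ 2 - b ^ 2) / b)) a :=
      Real.continuous_arctan.continuousAt.comp (hsq.div_const b)
    unfold qfun
    exact continuousAt_const.mul ((((continuousAt_const.mul t1).add
      (continuousAt_const.mul t2)).add
      ((by fun_prop : ContinuousAt (fun x : ℝ => 2 * x) a).mul t3)).sub
      (continuousAt_id.mul continuousAt_const))
  -- strict anti on Icc
  have hanti : StrictAntiOn (qfun b) (Set.Icc am (1/2 : ℝ)) := by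
    apply strictAntiOn_of_deriv_neg (convex_Icc _ _) hcont
    intro x hx
    rw [interior_Icc] at hx
    have hx' : x ∈ Set.Ioc am (1/2 : ℝ) := ⟨hx.1, hx.2.le⟩
    rw [(part1 x hx').1.deriv]
    exact (part1 x hx').2
  -- value at am
  have hval : qfun b am = -2 * Real.pi * am := by
    have h0 : 4 * am - 4 * am ^ 2 - b ^ 2 = 0 := by rw [hamdef]; nlinarith [hr2]
    have hsq0 : Real.sqrt (4 * am - 4 * am ^ 2 - b ^ 2) = 0 := by rw [h0, Real.sqrt_zero]
    unfold qfun
    rw [hsq0]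
    simp
    ring
  -- g := qfun + 2πa strictly monotone
  have hg : StrictMonoOn (fun a => qfun b a + 2 * Real.pi * a) (Set.Icc am (1/2 : ℝ)) := by
    apply strictMonoOn_of_deriv_pos (convex_Icc _ _)
    · exact hcont.add (by fun_prop)
    · intro x hx
      rw [interior_Icc] at hx
      have hx' : x ∈ Set.Ioc am (1/2 : ℝ) := ⟨hx.1, hx.2.le⟩
      have hd := (part1 x hx').1.add ((hasDerivAt_id x).const_mul (2 * Real.pi))
      simp only [id_eq, mul_one] at hd
      rw [(show HasDerivAt (fun a => qfun b a + 2 * Real.pi * a) _ x from hd).deriv]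
      have harct : 0 < Real.arctan (Real.sqrt (4 * x - 4 * x ^ 2 - b ^ 2) / b) :=
        Real.arctan_zero ▸ Real.arctan_strictMono
          (div_pos (Real.sqrt_pos.mpr (hDpos x hx')) hb0)
      linarith
  refine ⟨part1, hanti.mono Set.Ioc_subset_Icc_self, hval, ?_⟩
  intro a ha
  have haI : a ∈ Set.Icc am (1/2 : ℝ) := Set.Ioc_subset_Icc_self ha
  have hamI : am ∈ Set.Icc am (1/2 : ℝ) := ⟨le_refl _, by linarith⟩
  constructor
  · have h' := hg hamI haI ha.1
    simp only at h'
    rw [hval] at h'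
    linarith
  · have h' := hanti hamI haI ha.1
    rw [hval] at h'
    nlinarith [Real.pi_pos, mul_nonneg Real.pi_pos.le ham0]
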